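/- As n → ∞, ‖q_{2n}‖_∞ ∼ 4/(2π)^{2n}; that is, lim_{n→∞} (2π)^{2n} · max_{x∈[0,1]} |B_{2n}(x) − B_{2n}| / (2n)! = 4. -/

import Mathlib

/-!
The Fourier expansion of the even Bernoulli polynomials,
`B_{2n}(x) = (-1)^{n+1} 2 (2n)! / (2π)^{2n} ∑_{k ≥ 1} cos(2πkx) / k^{2n}` on `[0, 1]`,
gives `(2π)^{2n} |B_{2n}(x) - B_{2n}| / (2n)! = 2 ∑_{k ≥ 1} (1 - cos(2πkx)) / k^{2n}`.
This is at most `4 ζ(2n)` everywhere, and at least `4` at `x = 1/2` (the `k = 1` term alone).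
Finally `ζ(2n) → 1` by dominated convergence for series.
-/

open Filter Real

/-- The `n`-th Bernoulli polynomial, evaluated at a real number `x`. -/
noncomputable def bernPoly (n : ℕ) (x : ℝ) : ℝ :=
  Polynomial.aeval x (Polynomial.bernoulli n)

/-- The `n`-th Bernoulli number `B_n = B_n(0)`, as a real number. -/
noncomputable def bernNum (n : ℕ) : ℝ := (bernoulli n : ℝ)

/-- The sup norm `‖g‖_∞ = max_{x∈[0,1]} |g(x)|`. -/
noncomputable def normInf (g : ℝ → ℝ) : ℝ :=
  sSup ((fun x => |g x|) '' Set.Icc (0:ℝ) 1)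

open Set Topology

theorem tendsto_tsum_one_div_nat_pow_atTop :
    Tendsto (fun p : ℕ => ∑' k : ℕ, 1 / (k : ℝ) ^ p) atTop (𝓝 1) := by
  suffices h : Tendsto (fun p : ℕ => ∑' k : ℕ, 1 / (k : ℝ) ^ p) atTop
      (𝓝 (∑' k : ℕ, if k = 1 then 1 else 0)) by rwa [tsum_ite_eq] at h
  refine tendsto_tsum_of_dominated_convergence (bound := fun k : ℕ => 1 / (k : ℝ) ^ 2)
    (Real.summable_one_div_nat_pow.mpr one_lt_two) (fun k => ?_) ?_
  · simp_rw [← one_div_pow]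
    rcases eq_or_ne k 1 with rfl | hk
    · simp
    · have hlt : 1 / (k : ℝ) < 1 := by
        rcases Nat.eq_zero_or_pos k with rfl | hpos
        · simp -- `1 / 0 = 0` in `ℝ`
        · rw [div_lt_one (by positivity)]; exact_mod_cast (by omega : 1 < k)
      simpa [hk] using tendsto_pow_atTop_nhds_zero_of_lt_one (by positivity) hlt
  · filter_upwards [eventually_ge_atTop 2] with p hp k
    rw [Real.norm_of_nonneg (by positivity)]
    rcases Nat.eq_zero_or_pos k with rfl | hpos
    · simp [zero_pow (by omega : p ≠ 0)]
    · exact one_div_le_one_div_of_le (by positivity)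
        (pow_le_pow_right₀ (by exact_mod_cast hpos) hp)

theorem normInf_le {g : ℝ → ℝ} {M : ℝ} (h : ∀ x ∈ Icc (0 : ℝ) 1, |g x| ≤ M) : normInf g ≤ M :=
  csSup_le ((nonempty_Icc.mpr zero_le_one).image _) (forall_mem_image.mpr h)

theorem abs_le_normInf {g : ℝ → ℝ} {M : ℝ} (h : ∀ x ∈ Icc (0 : ℝ) 1, |g x| ≤ M) {x : ℝ}
    (hx : x ∈ Icc (0 : ℝ) 1) : |g x| ≤ normInf g :=
  le_csSup ⟨M, forall_mem_image.mpr h⟩ (mem_image_of_mem _ hx)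

theorem bernPoly_eq_eval_map (n : ℕ) (x : ℝ) :
    bernPoly n x = (Polynomial.map (algebraMap ℚ ℝ) (Polynomial.bernoulli n)).eval x := by
  simp [bernPoly, Polynomial.aeval_def, Polynomial.eval_map]

theorem bernPoly_zero (n : ℕ) : bernPoly n 0 = bernNum n := by
  rw [bernPoly_eq_eval_map, Polynomial.eval_zero_map, Polynomial.bernoulli_eval_zero, eq_ratCast,
    bernNum]

theorem hasSum_one_sub_cos_div_pow {n : ℕ} (hn : n ≠ 0) {x : ℝ} (hx : x ∈ Icc (0 : ℝ) 1) :
    HasSum (fun k : ℕ => (1 - cos (2 * π * k * x)) / (k : ℝ) ^ (2 * n))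
      ((-1) ^ n * (2 * π) ^ (2 * n) / 2 / (2 * n).factorial *
        (bernPoly (2 * n) x - bernNum (2 * n))) := by
  have h0 := hasSum_one_div_nat_pow_mul_cos hn (left_mem_Icc.mpr zero_le_one)
  have hx := hasSum_one_div_nat_pow_mul_cos hn hx
  rw [← bernPoly_eq_eval_map, bernPoly_zero] at h0
  rw [← bernPoly_eq_eval_map] at hx
  have hterms : (fun k : ℕ => (1 - cos (2 * π * k * x)) / (k : ℝ) ^ (2 * n)) =
      fun k : ℕ => 1 / (k : ℝ) ^ (2 * n) * cos (2 * π * k * 0) -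
        1 / (k : ℝ) ^ (2 * n) * cos (2 * π * k * x) := by
    funext k; rw [mul_zero, cos_zero]; ring
  have hvalue : (-1) ^ n * (2 * π) ^ (2 * n) / 2 / (2 * n).factorial *
        (bernPoly (2 * n) x - bernNum (2 * n)) =
      (-1) ^ (n + 1) * (2 * π) ^ (2 * n) / 2 / (2 * n).factorial * bernNum (2 * n) -
        (-1) ^ (n + 1) * (2 * π) ^ (2 * n) / 2 / (2 * n).factorial * bernPoly (2 * n) x := by
    rw [pow_succ]; ring
  rw [hterms, hvalue]
  exact h0.sub hx

section OneSubCos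

variable {p : ℕ}

theorem one_sub_cos_div_pow_nonneg (θ : ℝ) (k : ℕ) : 0 ≤ (1 - cos θ) / (k : ℝ) ^ p :=
  div_nonneg (sub_nonneg.mpr (cos_le_one θ)) (by positivity)

theorem one_sub_cos_div_pow_le (θ : ℝ) (k : ℕ) :
    (1 - cos θ) / (k : ℝ) ^ p ≤ 2 * (1 / (k : ℝ) ^ p) := by
  rw [← mul_one_div]
  gcongr
  linarith [neg_one_le_cos θ]

theorem summable_one_sub_cos_div_pow (hp : 1 < p) (x : ℝ) :
    Summable (fun k : ℕ => (1 - cos (2 * π * k * x)) / (k : ℝ) ^ p) :=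
  .of_nonneg_of_le (fun k => one_sub_cos_div_pow_nonneg _ k) (fun k => one_sub_cos_div_pow_le _ k)
    ((Real.summable_one_div_nat_pow.mpr hp).mul_left 2)

theorem tsum_one_sub_cos_div_pow_le (hp : 1 < p) (x : ℝ) :
    ∑' k : ℕ, (1 - cos (2 * π * k * x)) / (k : ℝ) ^ p ≤ 2 * ∑' k : ℕ, 1 / (k : ℝ) ^ p := by
  rw [← tsum_mul_left]
  exact (summable_one_sub_cos_div_pow hp x).tsum_le_tsum (fun k => one_sub_cos_div_pow_le _ k)
    ((Real.summable_one_div_nat_pow.mpr hp).mul_left 2)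

theorem two_le_tsum_one_sub_cos_div_pow_half (hp : 1 < p) :
    2 ≤ ∑' k : ℕ, (1 - cos (2 * π * k * (1 / 2))) / (k : ℝ) ^ p := by
  have hterm : (1 - cos (2 * π * ((1 : ℕ) : ℝ) * (1 / 2))) / ((1 : ℕ) : ℝ) ^ p = 2 := by
    rw [show 2 * π * ((1 : ℕ) : ℝ) * (1 / 2) = π by push_cast; ring, cos_pi]; norm_num
  calc (2 : ℝ) = (1 - cos (2 * π * ((1 : ℕ) : ℝ) * (1 / 2))) / ((1 : ℕ) : ℝ) ^ p := hterm.symm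
    _ ≤ _ := (summable_one_sub_cos_div_pow hp (1 / 2)).le_tsum 1
      (fun k _ => one_sub_cos_div_pow_nonneg _ k)

end OneSubCos

theorem two_pi_pow_div_factorial_mul_abs_bernPoly_sub_bernNum {n : ℕ} (hn : n ≠ 0) {x : ℝ}
    (hx : x ∈ Icc (0 : ℝ) 1) :
    (2 * π) ^ (2 * n) / (2 * n).factorial * |bernPoly (2 * n) x - bernNum (2 * n)| =
      2 * ∑' k : ℕ, (1 - cos (2 * π * k * x)) / (k : ℝ) ^ (2 * n) := by
  have h := hasSum_one_sub_cos_div_pow hn hx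
  have hnonneg := h.nonneg fun k => one_sub_cos_div_pow_nonneg _ k
  rw [h.tsum_eq, ← abs_of_nonneg hnonneg, abs_mul, abs_div, abs_div, abs_mul, abs_pow, abs_neg,
    abs_one, one_pow, one_mul, abs_of_pos (by positivity : (0 : ℝ) < (2 * π) ^ (2 * n)), abs_two,
    Nat.abs_cast]
  ring

theorem two_pi_pow_mul_normInf_div_factorial_mem_Icc {n : ℕ} (hn : n ≠ 0) :
    (2 * π) ^ (2 * n) * normInf (fun x => bernPoly (2 * n) x - bernNum (2 * n)) /
        (2 * n).factorial ∈ Icc 4 (4 * ∑' k : ℕ, 1 / (k : ℝ) ^ (2 * n)) := by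
  have hp : 1 < 2 * n := by omega
  set a : ℝ := (2 * π) ^ (2 * n) / (2 * n).factorial
  have ha : 0 < a := by positivity
  have hbound : ∀ x ∈ Icc (0 : ℝ) 1,
      |bernPoly (2 * n) x - bernNum (2 * n)| ≤ 4 * (∑' k : ℕ, 1 / (k : ℝ) ^ (2 * n)) / a := by
    intro x hx
    rw [le_div_iff₀' ha, two_pi_pow_div_factorial_mul_abs_bernPoly_sub_bernNum hn hx]
    linarith [tsum_one_sub_cos_div_pow_le hp x]
  have hhalf : (1 / 2 : ℝ) ∈ Icc (0 : ℝ) 1 := by norm_num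
  rw [mul_div_right_comm]
  constructor
  · calc (4 : ℝ) ≤ a * |bernPoly (2 * n) (1 / 2) - bernNum (2 * n)| := by
          rw [two_pi_pow_div_factorial_mul_abs_bernPoly_sub_bernNum hn hhalf]
          linarith [two_le_tsum_one_sub_cos_div_pow_half hp]
      _ ≤ a * normInf (fun x => bernPoly (2 * n) x - bernNum (2 * n)) := by
          gcongr; exact abs_le_normInf hbound hhalf
  · calc a * normInf (fun x => bernPoly (2 * n) x - bernNum (2 * n))
        ≤ a * (4 * (∑' k : ℕ, 1 / (k : ℝ) ^ (2 * n)) / a) := by gcongr; exact normInf_le hbound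
      _ = 4 * ∑' k : ℕ, 1 / (k : ℝ) ^ (2 * n) := mul_div_cancel₀ _ ha.ne'

/-- `‖q_{2n}‖_∞ ∼ 4/(2π)^{2n}` as `n → ∞`; that is,
`lim_{n→∞} (2π)^{2n} · max_{x∈[0,1]} |B_{2n}(x) − B_{2n}| / (2n)! = 4`. -/
theorem sup_norm_qB_asymptotics :
    Tendsto
      (fun n : ℕ =>
        (2 * π) ^ (2 * n) * normInf (fun x => bernPoly (2 * n) x - bernNum (2 * n)) /
          (((2 * n).factorial : ℝ)))
      atTop (nhds 4) := by
  have hzeta : Tendsto (fun n : ℕ => 4 * ∑' k : ℕ, 1 / (k : ℝ) ^ (2 * n)) atTop (𝓝 4) := by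
    simpa using (tendsto_tsum_one_div_nat_pow_atTop.comp
      (tendsto_id.const_mul_atTop' two_pos)).const_mul 4
  refine tendsto_of_tendsto_of_tendsto_of_le_of_le' tendsto_const_nhds hzeta ?_ ?_ <;>
    filter_upwards [eventually_ne_atTop 0] with n hn
  exacts [(two_pi_pow_mul_normInf_div_factorial_mem_Icc hn).1,
    (two_pi_pow_mul_normInf_div_factorial_mem_Icc hn).2]
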